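/- arXiv:1105.4344 — 2 statements merged into one kernel-verified Lean document; each statement's English description precedes it below -/
import Mathlib

section
/- Let X and Y be locally compact, separable, metrizable spaces, and let φ : X → X, ψ : Y → Y, and π : X → Y be proper surjective continuous maps satisfying π ∘ φ = ψ ∘ π. Then h(ψ) ≤ h(φ), where h denotes topological entropy. -/
open Filter Set Topology ENNReal

section PatraoEntropy

variable {X : Type*} [TopologicalSpace X]

/-- An *admissible cover* in the sense of Patrão: an open cover of the whole space
having at least one member with compact complement. -/
def AdmissibleCover (𝓐 : Set (Set X)) : Prop :=
  (∀ U ∈ 𝓐, IsOpen U) ∧ ⋃₀ 𝓐 = Set.univ ∧ ∃ U ∈ 𝓐, IsCompact Uᶜ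

/-- The minimal cardinality of a finite subcover of `𝓐`, as an extended nonnegative real
(`⊤` if there is no finite subcover). -/
noncomputable def coverMincard (𝓐 : Set (Set X)) : ℝ≥0∞ :=
  ⨅ (F : Finset (Set X)) (_ : ↑F ⊆ 𝓐) (_ : ⋃₀ (F : Set (Set X)) = Set.univ), (F.card : ℝ≥0∞)

/-- The dynamical refinement `𝓐 ∨ φ⁻¹ 𝓐 ∨ ⋯ ∨ φ⁻⁽ⁿ⁻¹⁾ 𝓐` of a cover `𝓐` under a map `φ`. -/
def dynRefine (φ : X → X) (𝓐 : Set (Set X)) (n : ℕ) : Set (Set X) :=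
  {U | ∃ f : ℕ → Set X, (∀ i, f i ∈ 𝓐) ∧ U = ⋂ i ∈ Finset.range n, φ^[i] ⁻¹' f i}

/-- The entropy of a map `φ` with respect to a cover `𝓐`. -/
noncomputable def coverEntropyOf (φ : X → X) (𝓐 : Set (Set X)) : EReal :=
  Filter.atTop.limsup fun n : ℕ => ENNReal.log (coverMincard (dynRefine φ 𝓐 n)) / (n : EReal)

/-- The topological entropy of `φ` in the sense of Patrão: the supremum, over all
admissible covers `𝓐`, of the entropy of `φ` with respect to `𝓐`. -/
noncomputable def patraoEntropy (φ : X → X) : EReal :=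
  ⨆ (𝓐 : Set (Set X)) (_ : AdmissibleCover 𝓐), coverEntropyOf φ 𝓐

end PatraoEntropy

lemma pullback_dynRefine {X Y : Type*} (φ : X → X) (ψ : Y → Y) (π : X → Y)
    (hcomm : Function.Semiconj π φ ψ) (𝓐 : Set (Set Y)) (n : ℕ) :
    dynRefine φ ((π ⁻¹' ·) '' 𝓐) n = (π ⁻¹' ·) '' dynRefine ψ 𝓐 n := by
  have key : ∀ f : ℕ → Set Y,
      (⋂ i ∈ Finset.range n, φ^[i] ⁻¹' (π ⁻¹' f i)) =
        π ⁻¹' ⋂ i ∈ Finset.range n, ψ^[i] ⁻¹' f i := by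
    intro f
    rw [Set.preimage_iInter₂]
    refine Set.iInter₂_congr fun i _ => ?_
    rw [← Set.preimage_comp, ← Set.preimage_comp,
      (hcomm.iterate_right i).comp_eq]
  ext U
  constructor
  · rintro ⟨g, hg, rfl⟩
    choose f hf hfg using hg
    refine ⟨⋂ i ∈ Finset.range n, ψ^[i] ⁻¹' f i, ⟨f, hf, rfl⟩, ?_⟩
    show π ⁻¹' _ = _
    rw [← key f]
    exact Set.iInter₂_congr fun i _ => by rw [← hfg i]
  · rintro ⟨V, ⟨f, hf, rfl⟩, rfl⟩
    exact ⟨fun i => π ⁻¹' f i, fun i => ⟨f i, hf i, rfl⟩, (key f).symm⟩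

lemma coverMincard_pullback_le {X Y : Type*} (π : X → Y) (hπs : Function.Surjective π)
    (𝓒 : Set (Set Y)) : coverMincard 𝓒 ≤ coverMincard ((π ⁻¹' ·) '' 𝓒) := by
  refine le_iInf fun F => le_iInf fun hF => le_iInf fun hFc => ?_
  have hsel : ∀ U ∈ F, ∃ V, V ∈ 𝓒 ∧ π ⁻¹' V = U := by
    intro U hU
    obtain ⟨V, hV, hVU⟩ := hF hU
    exact ⟨V, hV, hVU⟩
  classical
  choose! g hg1 hg2 using hsel
  refine iInf_le_of_le (F.image g) (iInf_le_of_le ?_ (iInf_le_of_le ?_ ?_))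
  · intro V hV
    simp only [Finset.coe_image, Set.mem_image, Finset.mem_coe] at hV
    obtain ⟨U, hU, rfl⟩ := hV
    exact hg1 U hU
  · apply Set.eq_univ_of_forall
    intro y
    obtain ⟨x, rfl⟩ := hπs y
    have hx : x ∈ ⋃₀ (F : Set (Set X)) := hFc ▸ Set.mem_univ x
    obtain ⟨U, hU, hxU⟩ := hx
    refine ⟨g U, by simpa using ⟨U, hU, rfl⟩, ?_⟩
    have := hg2 U hU
    rw [← this] at hxU
    exact hxU
  · exact_mod_cast Nat.cast_le.mpr (Finset.card_image_le)

/-- **Entropy does not increase under proper surjective factor maps**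
(Caldas–Patrão, Proposition 1.3). If `φ : X → X`, `ψ : Y → Y` and `π : X → Y` are proper
surjective continuous maps of locally compact, separable, metrizable spaces with
`π ∘ φ = ψ ∘ π`, then `h(ψ) ≤ h(φ)`. -/
theorem entropy_factor_le
    {X Y : Type*} [TopologicalSpace X] [TopologicalSpace Y]
    [LocallyCompactSpace X] [TopologicalSpace.SeparableSpace X]
    [TopologicalSpace.MetrizableSpace X]
    [LocallyCompactSpace Y] [TopologicalSpace.SeparableSpace Y]
    [TopologicalSpace.MetrizableSpace Y]
    (φ : X → X) (ψ : Y → Y) (π : X → Y)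
    (hφc : Continuous φ) (hφs : Function.Surjective φ)
    (hφp : ∀ K : Set X, IsCompact K → IsCompact (φ ⁻¹' K))
    (hψc : Continuous ψ) (hψs : Function.Surjective ψ)
    (hψp : ∀ K : Set Y, IsCompact K → IsCompact (ψ ⁻¹' K))
    (hπc : Continuous π) (hπs : Function.Surjective π)
    (hπp : ∀ K : Set Y, IsCompact K → IsCompact (π ⁻¹' K))
    (hcomm : π ∘ φ = ψ ∘ π) :
    patraoEntropy ψ ≤ patraoEntropy φ := by
  have hsemi : Function.Semiconj π φ ψ := fun x => congrFun hcomm x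
  refine iSup₂_le fun 𝓐 h𝓐 => ?_
  set 𝓑 : Set (Set X) := (π ⁻¹' ·) '' 𝓐 with h𝓑
  have h𝓑adm : AdmissibleCover 𝓑 := by
    obtain ⟨hopen, hcov, U, hU, hUc⟩ := h𝓐
    refine ⟨?_, ?_, π ⁻¹' U, ⟨U, hU, rfl⟩, ?_⟩
    · rintro V ⟨W, hW, rfl⟩
      exact (hopen W hW).preimage hπc
    · rw [Set.eq_univ_iff_forall]
      intro x
      have : π x ∈ ⋃₀ 𝓐 := hcov ▸ Set.mem_univ _
      obtain ⟨W, hW, hxW⟩ := this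
      exact ⟨π ⁻¹' W, ⟨W, hW, rfl⟩, hxW⟩
    · rw [← Set.preimage_compl]
      exact hπp _ hUc
  have hEnt : coverEntropyOf ψ 𝓐 ≤ coverEntropyOf φ 𝓑 := by
    refine Filter.limsup_le_limsup (Filter.Eventually.of_forall fun n => ?_)
    refine EReal.div_le_div_right_of_nonneg (by exact_mod_cast Nat.cast_nonneg n) ?_
    apply ENNReal.log_monotone
    rw [h𝓑, pullback_dynRefine φ ψ π hsemi 𝓐 n]
    exact coverMincard_pullback_le π hπs _
  exact hEnt.trans (le_iSup₂ (f := fun 𝓑 _ => coverEntropyOf φ 𝓑) 𝓑 h𝓑adm)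
end

section
/- Let G ≤ GL(d, ℝ) be a connected linear semi-simple Lie group and let C_g : G → G be conjugation by an element g ∈ G with multiplicative Jordan decomposition g = e·h·u (e elliptic, h hyperbolic, u unipotent, pairwise commuting). Then the recurrent set of C_g equals G_h ∩ G_u, where G_h and G_u are the centralizers in G of h and u respectively (equivalently, the fixed point sets of C_h and of C_u in G). Moreover, C_g restricted to its recurrent set is an isometry for some distance. -/
open Filter Set Topology Matrix

attribute [local instance 100] LieRing.ofAssociativeRing LieAlgebra.ofAssociativeAlgebra

/-- The *recurrent set* of a continuous map `f`: the set of points `x` that are limits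
of a subsequence `f^{n_k}(x)` with `n_k → ∞`. -/
def recurrentSet {X : Type*} [TopologicalSpace X] (f : X → X) : Set X :=
  {x | ∃ n : ℕ → ℕ, Filter.Tendsto n Filter.atTop Filter.atTop ∧
    Filter.Tendsto (fun k => f^[n k] x) Filter.atTop (nhds x)}

/-- An element of `GL(d, ℝ)` is *elliptic* when it is conjugate to an orthogonal matrix,
i.e. it is semisimple with all eigenvalues of modulus `1`. -/
def IsElliptic {d : ℕ} (e : Matrix.GeneralLinearGroup (Fin d) ℝ) : Prop :=
  ∃ p : Matrix.GeneralLinearGroup (Fin d) ℝ,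
    ((p * e * p⁻¹ : Matrix.GeneralLinearGroup (Fin d) ℝ) : Matrix (Fin d) (Fin d) ℝ) ∈
      Matrix.orthogonalGroup (Fin d) ℝ

/-- An element of `GL(d, ℝ)` is *hyperbolic* when it is conjugate to a diagonal matrix
with positive diagonal entries, i.e. it is semisimple with positive real eigenvalues. -/
def IsHyperbolic {d : ℕ} (h : Matrix.GeneralLinearGroup (Fin d) ℝ) : Prop :=
  ∃ (p : Matrix.GeneralLinearGroup (Fin d) ℝ) (v : Fin d → ℝ), (∀ i, 0 < v i) ∧
    ((p * h * p⁻¹ : Matrix.GeneralLinearGroup (Fin d) ℝ) : Matrix (Fin d) (Fin d) ℝ) =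
      Matrix.diagonal v

/-- An element of `GL(d, ℝ)` is *unipotent* when `(u - 1)^d = 0`. -/
def IsUnipotentGL {d : ℕ} (u : Matrix.GeneralLinearGroup (Fin d) ℝ) : Prop :=
  ((u : Matrix (Fin d) (Fin d) ℝ) - 1) ^ d = 0

/-! In a basis diagonalising `h = diag(v)`, the `(i, j)` entry of `(h u)ⁿ X (h u)⁻ⁿ` is
`(vᵢ / vⱼ)ⁿ` times a polynomial in `n` (binomial expansion of the unipotent `uⁿ`), while the
powers of the elliptic `e` stay in a compact set. If `gⁿᵏ X g⁻ⁿᵏ → X`, pass to a subsequence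
along which `eⁿᵏ` converges: then `(h u)ⁿᵏ X (h u)⁻ⁿᵏ` converges, and an exponential times a
polynomial converges along a subsequence only if it converges outright, to a limit vanishing
off the blocks `vᵢ = vⱼ`. That limit commutes with `h` and `u`, and therefore so does `X`.
Conversely, on the centralizer of `h` and `u` the map `C_g` is `C_e`, and some powers of `e`
tend to `1`. Conjugating `e` into the orthogonal group makes `C_e` an isometry of the operator
norm, which gives the distance. -/

open scoped Matrix.Norms.L2Operator
open ConjAct

theorem Topology.IsInducing.mem_recurrentSet_iff {X Y : Type*} [TopologicalSpace X]
    [TopologicalSpace Y] {ι : X → Y} (hι : IsInducing ι) {f : X → X} {F : Y → Y}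
    (hf : Function.Semiconj ι f F) {x : X} :
    x ∈ recurrentSet f ↔ ι x ∈ recurrentSet F := by
  simp only [recurrentSet, Set.mem_ofPred_eq, hι.tendsto_nhds_iff, Function.comp_def,
    hf.iterate_right _ _]

theorem exists_tendsto_pow_nhds_one {G : Type*} [Group G] [TopologicalSpace G]
    [IsTopologicalGroup G] [FirstCountableTopology G] {a : G} {K : Set G} (hK : IsCompact K)
    (haK : ∀ n : ℕ, a ^ n ∈ K) :
    ∃ m : ℕ → ℕ, Tendsto m atTop atTop ∧ Tendsto (fun k => a ^ m k) atTop (𝓝 1) := by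
  obtain ⟨b, -, ψ, hψ, hlim⟩ := hK.tendsto_subseq haK
  -- `a ^ (ψ (2k) - ψ k) = a ^ ψ (2k) * (a ^ ψ k)⁻¹ → b * b⁻¹`, and the gap is at least `k`.
  have hgap (k : ℕ) : k + ψ k ≤ ψ (k + k) := hψ.add_le_nat k k
  refine ⟨fun k => ψ (k + k) - ψ k,
    tendsto_atTop_mono (fun k => by have := hgap k; simp only [id]; omega) tendsto_id, ?_⟩
  have hdouble : Tendsto (fun k => a ^ ψ (k + k) * (a ^ ψ k)⁻¹) atTop (𝓝 (b * b⁻¹)) :=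
    (hlim.comp (tendsto_atTop_mono (fun k => Nat.le_add_right k k) tendsto_id)).mul hlim.inv
  rw [mul_inv_cancel] at hdouble
  refine hdouble.congr fun k => ?_
  rw [← pow_sub_mul_pow a (by have := hgap k; omega : ψ k ≤ ψ (k + k)), mul_inv_cancel_right]

theorem ConjAct.continuous_units_smul {M : Type*} [Monoid M] [TopologicalSpace M]
    [ContinuousMul M] (g : ConjAct Mˣ) : Continuous fun x : M => g • x := by
  simp only [units_smul_def]
  fun_prop

theorem Commute.conjAct_units_smul {M : Type*} [Monoid M] {a b : M} (hab : Commute a b)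
    (g : ConjAct Mˣ) : Commute (g • a) (g • b) := by
  rw [Commute, SemiconjBy, ← smul_mul', ← smul_mul', hab.eq]

theorem ConjAct.units_smul_eq_self_iff_commute {M : Type*} [Monoid M] {a : Mˣ} {y : M} :
    toConjAct a • y = y ↔ Commute (a : M) y := by
  rw [units_smul_def, ofConjAct_toConjAct, Units.mul_inv_eq_iff_eq_mul]
  rfl

theorem ConjAct.commute_of_tendsto_pow_units_smul {M : Type*} [Monoid M] [TopologicalSpace M]
    [ContinuousMul M] [T2Space M] {a : Mˣ} {Z Y : M}
    (hY : Tendsto (fun l : ℕ => toConjAct a ^ l • Z) atTop (𝓝 Y)) : Commute (a : M) Y := by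
  have hshift : Tendsto (fun l : ℕ => toConjAct a • toConjAct a ^ l • Z) atTop (𝓝 Y) :=
    (hY.comp (tendsto_add_atTop_nat 1)).congr fun l => by
      rw [Function.comp_apply, pow_succ', mul_smul]
  exact units_smul_eq_self_iff_commute.mp <|
    tendsto_nhds_unique (((continuous_units_smul _).tendsto Y).comp hY) hshift

theorem ConjAct.continuous_toConjAct_units_smul {M : Type*} [Monoid M] [TopologicalSpace M]
    [ContinuousMul M] : Continuous fun p : Mˣ × M => toConjAct p.1 • p.2 := by
  simp only [units_smul_def, ofConjAct_toConjAct]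
  fun_prop

theorem ConjAct.isEmbedding_units_smul {M : Type*} [Monoid M] [TopologicalSpace M]
    [ContinuousMul M] (g : ConjAct Mˣ) : IsEmbedding fun x : M => g • x :=
  Function.LeftInverse.isEmbedding (f := fun x : M => g⁻¹ • x) (inv_smul_smul g)
    (continuous_units_smul _) (continuous_units_smul _)

open Polynomial in
noncomputable def polynomialSequences : Subalgebra ℝ (ℕ → ℝ) :=
  (AlgHom.pi fun m : ℕ => aeval (m : ℝ)).range

namespace polynomialSequences

open Polynomial

theorem mem_iff {f : ℕ → ℝ} :
    f ∈ polynomialSequences ↔ ∃ q : ℝ[X], ∀ m : ℕ, f m = q.eval (m : ℝ) := by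
  simp [polynomialSequences, funext_iff, eq_comm]

theorem natCast_choose_mem (a : ℕ) : (fun m : ℕ => (m.choose a : ℝ)) ∈ polynomialSequences :=
  mem_iff.mpr ⟨C (a.factorial : ℝ)⁻¹ * descPochhammer ℝ a, fun m => by
    rw [Nat.cast_choose_eq_descPochhammer_div, eval_mul, eval_C, div_eq_inv_mul]⟩

theorem eq_of_tendsto_comp {f : ℕ → ℝ} (hf : f ∈ polynomialSequences) {m : ℕ → ℕ}
    (hm : Tendsto m atTop atTop) {L : ℝ} (hL : Tendsto (fun k => f (m k)) atTop (𝓝 L)) (n : ℕ) :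
    f n = L := by
  obtain ⟨q, hq⟩ := mem_iff.mp hf
  simp only [hq] at hL ⊢
  rcases le_or_gt q.degree 0 with hdeg | hdeg
  · rw [eq_C_of_degree_le_zero hdeg] at hL ⊢
    simpa using hL
  · exact absurd hL.abs (not_tendsto_atTop_of_tendsto_nhds ·
      ((q.abs_tendsto_atTop hdeg).comp (tendsto_natCast_atTop_atTop.comp hm)))

theorem tendsto_pow_mul_nhds_zero {f : ℕ → ℝ} (hf : f ∈ polynomialSequences) {r : ℝ}
    (hr : |r| < 1) : Tendsto (fun n => r ^ n * f n) atTop (𝓝 0) := by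
  obtain ⟨q, hq⟩ := mem_iff.mp hf
  have hsum (n : ℕ) : r ^ n * f n =
      ∑ i ∈ Finset.range (q.natDegree + 1), q.coeff i * ((n : ℝ) ^ i * r ^ n) := by
    rw [hq, eval_eq_sum_range, Finset.mul_sum]
    exact Finset.sum_congr rfl fun i _ => by ring
  simp only [hsum]
  simpa using tendsto_finsetSum _ fun i _ =>
    (tendsto_pow_const_mul_const_pow_of_abs_lt_one i hr).const_mul (q.coeff i)

theorem tendsto_pow_mul_of_tendsto_comp {f : ℕ → ℝ} (hf : f ∈ polynomialSequences) {r : ℝ}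
    (hr : 0 < r) {m : ℕ → ℕ} (hm : Tendsto m atTop atTop) {L : ℝ}
    (hL : Tendsto (fun k => r ^ m k * f (m k)) atTop (𝓝 L)) :
    Tendsto (fun n => r ^ n * f n) atTop (𝓝 L) ∧ (r ≠ 1 → L = 0) := by
  rcases lt_trichotomy r 1 with hr1 | rfl | hr1
  · have h0 := tendsto_pow_mul_nhds_zero hf (by rwa [abs_of_pos hr])
    have hL0 : L = 0 := tendsto_nhds_unique hL (h0.comp hm)
    exact ⟨hL0 ▸ h0, fun _ => hL0⟩
  · simp only [one_pow, one_mul] at hL ⊢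
    simp [eq_of_tendsto_comp hf hm hL]
  · -- dividing by `r ^ m k → ∞` shows that `f` vanishes along `m`, hence everywhere
    have hinv : Tendsto (fun k => (r⁻¹) ^ m k) atTop (𝓝 0) :=
      (tendsto_pow_atTop_nhds_zero_of_lt_one (inv_nonneg.mpr hr.le)
        (inv_lt_one_of_one_lt₀ hr1)).comp hm
    have hf0 : Tendsto (fun k => f (m k)) atTop (𝓝 0) := by
      refine (zero_mul L ▸ hinv.mul hL).congr fun k => ?_
      rw [inv_pow, inv_mul_cancel_left₀ (pow_ne_zero _ hr.ne')]
    have hzero := eq_of_tendsto_comp hf hm hf0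
    have hL0 : L = 0 := tendsto_nhds_unique hL (by simp [hzero])
    exact ⟨by simp [hzero, hL0], fun _ => hL0⟩

end polynomialSequences

theorem one_add_pow_eq_sum_of_pow_eq_zero {R : Type*} [Ring R] {N : R} {k : ℕ}
    (hN : N ^ k = 0) (m : ℕ) :
    (1 + N) ^ m = ∑ a ∈ Finset.range k, m.choose a • N ^ a := by
  have hsub {s t : ℕ} (hst : s ≤ t) (hvan : ∀ a, s ≤ a → m.choose a • N ^ a = 0) :
      ∑ a ∈ Finset.range s, m.choose a • N ^ a = ∑ a ∈ Finset.range t, m.choose a • N ^ a :=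
    Finset.sum_subset (Finset.range_subset_range.mpr hst) fun a _ ha =>
      hvan a (not_lt.mp (Finset.mem_range.not.mp ha))
  have hchoose (a) (ha : m + 1 ≤ a) : m.choose a • N ^ a = 0 := by
    rw [Nat.choose_eq_zero_of_lt (by omega), zero_smul]
  have hnil (a) (ha : k ≤ a) : m.choose a • N ^ a = 0 := by
    rw [pow_eq_zero_of_le ha hN, smul_zero]
  rw [add_comm, (Commute.one_right N).add_pow]
  simp only [one_pow, mul_one, ← nsmul_eq_mul', hsub (le_max_left (m + 1) k) hchoose,
    ← hsub (le_max_right (m + 1) k) hnil]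

section Matrix

variable {n : Type*} [Fintype n] [DecidableEq n]

theorem Matrix.GeneralLinearGroup.isEmbedding_val :
    IsEmbedding (Units.val : GL n ℝ → Matrix n n ℝ) := by
  refine Units.isEmbedding_val_mk' (f := Inv.inv) ?_ fun u => (Matrix.coe_units_inv u).symm
  intro A hA
  refine (continuousAt_matrix_inv A ?_).continuousWithinAt
  simpa [Ring.inverse_eq_inv'] using
    continuousAt_inv₀ ((Matrix.isUnit_iff_isUnit_det A).mp hA).ne_zero

instance : FirstCountableTopology (GL n ℝ) :=
  Matrix.GeneralLinearGroup.isEmbedding_val.firstCountableTopology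

theorem Matrix.isCompact_orthogonalGroup :
    IsCompact (orthogonalGroup n ℝ : Set (Matrix n n ℝ)) := by
  refine Metric.isCompact_of_isClosed_isBounded isClosed_unitary ?_
  rcases subsingleton_or_nontrivial (Matrix n n ℝ) with h | h
  · exact (Set.toFinite _).isBounded
  · exact isBounded_iff_forall_norm_le.mpr ⟨1, fun U hU => (CStarRing.norm_of_mem_unitary hU).le⟩

theorem Matrix.continuous_unitary_toUnits :
    Continuous (Unitary.toUnits : unitary (Matrix n n ℝ) → GL n ℝ) :=
  Units.continuous_iff.mpr ⟨continuous_subtype_val, continuous_star.comp continuous_subtype_val⟩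

theorem Matrix.dist_toConjAct_smul_of_mem_unitary {O : GL n ℝ}
    (hO : (O : Matrix n n ℝ) ∈ unitary (Matrix n n ℝ))
    (A B : Matrix n n ℝ) :
    dist (toConjAct O • A) (toConjAct O • B) = dist A B := by
  have hinv : ((O⁻¹ : GL n ℝ) : Matrix n n ℝ) = star (O : Matrix n n ℝ) :=
    Units.inv_eq_of_mul_eq_one_right (Unitary.mul_star_self_of_mem hO)
  simp only [units_smul_def, ofConjAct_toConjAct, hinv, dist_eq_norm, ← mul_sub, ← sub_mul,
    CStarRing.norm_mem_unitary_mul _ hO, CStarRing.norm_mul_mem_unitary _ (Unitary.star_mem hO)]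

open polynomialSequences in
theorem Matrix.pow_mul_mul_pow_apply_mem_polynomialSequences {W W' : Matrix n n ℝ} {k : ℕ}
    (hW : (W - 1) ^ k = 0) (hW' : (W' - 1) ^ k = 0) (Z : Matrix n n ℝ) (i j : n) :
    (fun m : ℕ => (W ^ m * Z * W' ^ m) i j) ∈ polynomialSequences := by
  have hexp {V : Matrix n n ℝ} (hV : (V - 1) ^ k = 0) (m : ℕ) :
      V ^ m = ∑ a ∈ Finset.range k, m.choose a • (V - 1) ^ a := by
    rw [← one_add_pow_eq_sum_of_pow_eq_zero hV, add_sub_cancel]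
  have hentry : (fun m : ℕ => (W ^ m * Z * W' ^ m) i j) =
      ∑ a ∈ Finset.range k, ∑ b ∈ Finset.range k,
        (fun m : ℕ => (m.choose a : ℝ)) * (fun m : ℕ => (m.choose b : ℝ)) *
          algebraMap ℝ (ℕ → ℝ) (((W - 1) ^ a * Z * (W' - 1) ^ b) i j) := by
    ext m
    simp only [hexp hW, hexp hW', ← Nat.cast_smul_eq_nsmul ℝ, Finset.sum_mul, Finset.mul_sum,
      Finset.sum_apply, Matrix.sum_apply, Pi.mul_apply, Pi.algebraMap_apply,
      Algebra.algebraMap_self, RingHom.id_apply, smul_mul_assoc, mul_smul_comm,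
      Matrix.smul_apply, smul_eq_mul]
    rw [Finset.sum_comm]
    exact Finset.sum_congr rfl fun a _ => Finset.sum_congr rfl fun b _ => by ring
  rw [hentry]
  exact Subalgebra.sum_mem _ fun a _ => Subalgebra.sum_mem _ fun b _ =>
    Subalgebra.mul_mem _ (Subalgebra.mul_mem _ (natCast_choose_mem a) (natCast_choose_mem b))
      (Subalgebra.algebraMap_mem _ _)

theorem Matrix.diagonal_pow_mul_mul_diagonal_pow_apply (v w : n → ℝ) (X : Matrix n n ℝ)
    (m : ℕ) (i j : n) :
    (diagonal v ^ m * X * diagonal w ^ m) i j = (v i * w j) ^ m * X i j := by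
  simp only [diagonal_pow, mul_diagonal, diagonal_mul, Pi.pow_apply, mul_pow]
  ring

open polynomialSequences in
theorem Matrix.tendsto_diagonal_conj_of_tendsto_comp {v : n → ℝ} (hv : ∀ i, 0 < v i)
    {W W' : Matrix n n ℝ} {k : ℕ} (hW : (W - 1) ^ k = 0) (hW' : (W' - 1) ^ k = 0)
    {Z Y : Matrix n n ℝ} {m : ℕ → ℕ} (hm : Tendsto m atTop atTop)
    (hY : Tendsto (fun l => diagonal v ^ m l * (W ^ m l * Z * W' ^ m l) * diagonal v⁻¹ ^ m l)
      atTop (𝓝 Y)) :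
    Tendsto (fun l => diagonal v ^ l * (W ^ l * Z * W' ^ l) * diagonal v⁻¹ ^ l) atTop (𝓝 Y) ∧
      Commute (diagonal v) Y := by
  have hentry (i j : n) := tendsto_pow_mul_of_tendsto_comp
    (pow_mul_mul_pow_apply_mem_polynomialSequences hW hW' Z i j)
    (mul_pos (hv i) (inv_pos.mpr (hv j))) hm (L := Y i j) <| by
      simpa only [Function.comp_def, id, diagonal_pow_mul_mul_diagonal_pow_apply,
        Pi.inv_apply] using ((continuous_id.matrix_elem i j).tendsto Y).comp hY
  refine ⟨tendsto_pi_nhds.mpr fun i => tendsto_pi_nhds.mpr fun j => ?_, ?_⟩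
  · simpa only [diagonal_pow_mul_mul_diagonal_pow_apply, Pi.inv_apply] using (hentry i j).1
  · ext i j
    rw [diagonal_mul, mul_diagonal]
    by_cases hij : v i = v j
    · rw [hij, mul_comm]
    · rw [(hentry i j).2 fun h => hij ?_, zero_mul, mul_zero]
      rwa [← div_eq_mul_inv, div_eq_one_iff_eq (hv j).ne'] at h

end Matrix

theorem IsElliptic.exists_isCompact_pow_mem {d : ℕ} {e : GL (Fin d) ℝ} (he : IsElliptic e) :
    ∃ K : Set (GL (Fin d) ℝ), IsCompact K ∧ ∀ k : ℕ, e ^ k ∈ K := by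
  obtain ⟨p, hp⟩ := he
  have : CompactSpace (unitary (Matrix (Fin d) (Fin d) ℝ)) :=
    isCompact_iff_compactSpace.mp Matrix.isCompact_orthogonalGroup
  refine ⟨Set.range fun o => p⁻¹ * Unitary.toUnits o * p,
    isCompact_range ((continuous_const.mul Matrix.continuous_unitary_toUnits).mul continuous_const),
    fun k => ⟨⟨_, hp⟩ ^ k, ?_⟩⟩
  have : Unitary.toUnits ⟨_, hp⟩ = p * e * p⁻¹ := Units.ext rfl
  simp only [map_pow, this, conj_pow]
  group

section Unipotent

variable {d : ℕ} {u : GL (Fin d) ℝ}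

theorem IsUnipotentGL.conj (hu : IsUnipotentGL u) (p : GL (Fin d) ℝ) :
    IsUnipotentGL (p * u * p⁻¹) := by
  have : ((p * u * p⁻¹ : GL (Fin d) ℝ) : Matrix (Fin d) (Fin d) ℝ) - 1 =
      toConjAct p • ((u : Matrix (Fin d) (Fin d) ℝ) - 1) := by
    rw [ConjAct.units_smul_def, ConjAct.ofConjAct_toConjAct, Units.val_mul, Units.val_mul,
      mul_sub, sub_mul, mul_one, Units.mul_inv]
  rw [IsUnipotentGL, this, ← smul_pow', hu, smul_zero]

theorem IsUnipotentGL.inv (hu : IsUnipotentGL u) : IsUnipotentGL u⁻¹ := by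
  have hcomm : Commute ((u⁻¹ : GL (Fin d) ℝ) : Matrix (Fin d) (Fin d) ℝ) (↑u - 1) :=
    (Commute.units_inv_left (Commute.refl _)).sub_right (Commute.one_right _)
  have : ((u⁻¹ : GL (Fin d) ℝ) : Matrix (Fin d) (Fin d) ℝ) - 1 =
      -(((u⁻¹ : GL (Fin d) ℝ) : Matrix (Fin d) (Fin d) ℝ) * (↑u - 1)) := by
    rw [mul_sub, Units.inv_mul, mul_one, neg_sub]
  unfold IsUnipotentGL
  rw [this, neg_pow, hcomm.mul_pow, hu, mul_zero, mul_zero]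

end Unipotent

theorem IsHyperbolic.commute_of_tendsto_pow_smul {d : ℕ} {h u : GL (Fin d) ℝ}
    (hh : IsHyperbolic h) (hu : IsUnipotentGL u) (chu : Commute h u)
    {Z Y : Matrix (Fin d) (Fin d) ℝ} {m : ℕ → ℕ} (hm : Tendsto m atTop atTop)
    (hY : Tendsto (fun k => toConjAct (h * u) ^ m k • Z) atTop (𝓝 Y)) :
    Commute (h : Matrix (Fin d) (Fin d) ℝ) Y ∧ Commute (u : Matrix (Fin d) (Fin d) ℝ) Y := by
  obtain ⟨p, v, hv, hD⟩ := hh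
  set D := p * h * p⁻¹
  set w := p * u * p⁻¹
  have hDinv : ((D⁻¹ : GL (Fin d) ℝ) : Matrix (Fin d) (Fin d) ℝ) = diagonal v⁻¹ := by
    refine Units.inv_eq_of_mul_eq_one_right ?_
    rw [hD, diagonal_mul_diagonal, ← diagonal_one]
    exact congrArg diagonal (funext fun i => mul_inv_cancel₀ (hv i).ne')
  have hcoord (l : ℕ) (X : Matrix (Fin d) (Fin d) ℝ) : toConjAct p • (toConjAct (h * u) ^ l • X) =
      diagonal v ^ l * (↑w ^ l * (toConjAct p • X) * ↑w⁻¹ ^ l) * diagonal v⁻¹ ^ l := by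
    have : toConjAct p * toConjAct (h * u) ^ l = toConjAct (D ^ l * w ^ l) * toConjAct p := by
      rw [← map_pow, ← map_mul, ← map_mul, conj_pow, conj_pow, chu.mul_pow]; group
    rw [smul_smul, this, mul_smul, ConjAct.units_smul_def, ConjAct.ofConjAct_toConjAct,
      _root_.mul_inv_rev, ← inv_pow, ← inv_pow]
    simp only [Units.val_mul, Units.val_pow_eq_pow_val, hD, hDinv, mul_assoc]
  have hsmul := continuous_units_smul (M := Matrix (Fin d) (Fin d) ℝ)
  obtain ⟨hfull, hcomm⟩ := Matrix.tendsto_diagonal_conj_of_tendsto_comp hv (hu.conj p)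
    (hu.conj p).inv hm (Z := toConjAct p • Z) (Y := toConjAct p • Y) <| by
      simpa only [Function.comp_def, hcoord] using ((hsmul (toConjAct p)).tendsto Y).comp hY
  have hconv : Tendsto (fun l => toConjAct (h * u) ^ l • Z) atTop (𝓝 Y) := by
    simpa only [Function.comp_def, inv_smul_smul] using
      ((hsmul (toConjAct p)⁻¹).tendsto _).comp (hfull.congr fun l => (hcoord l Z).symm)
  have hcommh : Commute (h : Matrix (Fin d) (Fin d) ℝ) Y := by
    have hDh : (D : Matrix (Fin d) (Fin d) ℝ) = toConjAct p • (h : Matrix (Fin d) (Fin d) ℝ) := by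
      simp [D, units_smul_def, mul_assoc]
    simpa only [← hD, hDh, inv_smul_smul] using hcomm.conjAct_units_smul (toConjAct p)⁻¹
  refine ⟨hcommh, ?_⟩
  have hu_eq : (u : Matrix (Fin d) (Fin d) ℝ) =
      ((h⁻¹ : GL (Fin d) ℝ) : Matrix (Fin d) (Fin d) ℝ) *
        ((h * u : GL (Fin d) ℝ) : Matrix (Fin d) (Fin d) ℝ) := by
    rw [Units.val_mul, Units.inv_mul_cancel_left]
  rw [hu_eq]
  exact hcommh.units_inv_left.mul_left (commute_of_tendsto_pow_units_smul hconv)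

theorem mem_recurrentSet_toConjAct_smul_iff {d : ℕ} {g e h u : GL (Fin d) ℝ} (he : IsElliptic e)
    (hh : IsHyperbolic h) (hu : IsUnipotentGL u) (hdecomp : g = e * h * u)
    (ceh : Commute e h) (ceu : Commute e u) (chu : Commute h u) (X : Matrix (Fin d) (Fin d) ℝ) :
    X ∈ recurrentSet (fun Y : Matrix (Fin d) (Fin d) ℝ => toConjAct g • Y) ↔
      Commute (h : Matrix (Fin d) (Fin d) ℝ) X ∧ Commute (u : Matrix (Fin d) (Fin d) ℝ) X := by
  have hiter (l : ℕ) : (fun Y => toConjAct g • Y)^[l] X =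
      toConjAct e ^ l • toConjAct (h * u) ^ l • X := by
    rw [smul_iterate, ← mul_smul, hdecomp, mul_assoc, map_mul,
      ((ceh.mul_right ceu).map toConjAct).mul_pow]
  have hsmul := continuous_toConjAct_units_smul (M := Matrix (Fin d) (Fin d) ℝ)
  obtain ⟨K, hK, heK⟩ := he.exists_isCompact_pow_mem
  simp only [recurrentSet, Set.mem_ofPred_eq, hiter]
  constructor
  · rintro ⟨m, hm, hX⟩
    obtain ⟨E, -, φ, hφ, hE⟩ := hK.tendsto_subseq fun k => heK (m k)
    have hY : Tendsto (fun k => toConjAct (h * u) ^ m (φ k) • X) atTop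
        (𝓝 (toConjAct E⁻¹ • X)) := by
      refine ((hsmul.tendsto (E⁻¹, X)).comp (hE.inv.prodMk_nhds (hX.comp hφ.tendsto_atTop))).congr
        fun k => ?_
      simp [map_inv, map_pow]
    obtain ⟨hhY, huY⟩ := hh.commute_of_tendsto_pow_smul hu chu (hm.comp hφ.tendsto_atTop) hY
    have hEcomm {a : GL (Fin d) ℝ} (hea : Commute e a) :
        toConjAct E • (a : Matrix (Fin d) (Fin d) ℝ) = a := by
      have : E ∈ Set.centralizer {a} := (Set.isClosed_centralizer _).mem_of_tendsto hE
        (Eventually.of_forall fun k => by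
          simpa [Set.mem_centralizer_iff] using ((hea.pow_left _).eq).symm)
      exact units_smul_eq_self_iff_commute.mpr
        (Commute.units_val (Set.mem_centralizer_iff.mp this a rfl).symm)
    have hX : toConjAct E • toConjAct E⁻¹ • X = X := by rw [map_inv, smul_inv_smul]
    rw [← hX, ← hEcomm ceh, ← hEcomm ceu]
    exact ⟨hhY.conjAct_units_smul _, huY.conjAct_units_smul _⟩
  · rintro ⟨hhX, huX⟩
    obtain ⟨m, hm, he1⟩ := exists_tendsto_pow_nhds_one hK heK
    refine ⟨m, hm, ?_⟩
    have hfix (l : ℕ) : toConjAct (h * u) ^ l • X = X := by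
      rw [← map_pow, units_smul_eq_self_iff_commute, Units.val_pow_eq_pow_val, Units.val_mul]
      exact (hhX.mul_left huX).pow_left l
    simpa only [Function.comp_def, hfix, map_pow, map_one, one_smul] using
      (hsmul.tendsto (1, X)).comp (he1.prodMk_nhds tendsto_const_nhds)

theorem exists_metricSpace_isometry_conj_of_isElliptic {d : ℕ} {S : Subgroup (GL (Fin d) ℝ)}
    {g e : GL (Fin d) ℝ} (hg : g ∈ S) (he : IsElliptic e) {R : Set S}
    (hR : ∀ x ∈ R, g * (x : GL (Fin d) ℝ) * g⁻¹ = e * x * e⁻¹) :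
    ∃ m : MetricSpace R, m.toUniformSpace.toTopologicalSpace = instTopologicalSpaceSubtype ∧
      ∀ (x y : R) (hx : (⟨g, hg⟩ : S) * (x : S) * (⟨g, hg⟩ : S)⁻¹ ∈ R)
        (hy : (⟨g, hg⟩ : S) * (y : S) * (⟨g, hg⟩ : S)⁻¹ ∈ R),
        m.dist ⟨(⟨g, hg⟩ : S) * (x : S) * (⟨g, hg⟩ : S)⁻¹, hx⟩
          ⟨(⟨g, hg⟩ : S) * (y : S) * (⟨g, hg⟩ : S)⁻¹, hy⟩ = m.dist x y := by
  obtain ⟨p, hp⟩ := he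
  let Φ (z : R) : Matrix (Fin d) (Fin d) ℝ := toConjAct p • ((z : S) : GL (Fin d) ℝ)
  have hΦ : IsEmbedding Φ := (isEmbedding_units_smul _).comp
    (Matrix.GeneralLinearGroup.isEmbedding_val.comp
      (IsEmbedding.subtypeVal.comp IsEmbedding.subtypeVal))
  refine ⟨hΦ.comapMetricSpace Φ, rfl, fun x y hx hy => ?_⟩
  have hΦconj (z : R) (hz : (⟨g, hg⟩ : S) * (z : S) * (⟨g, hg⟩ : S)⁻¹ ∈ R) :
      Φ ⟨_, hz⟩ = toConjAct (p * e * p⁻¹) • Φ z := by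
    have hgz : (((⟨g, hg⟩ : S) * (z : S) * (⟨g, hg⟩ : S)⁻¹ : S) : GL (Fin d) ℝ) =
        e * (z : S) * e⁻¹ := hR z z.2
    simp only [Φ]
    rw [hgz]
    simp only [units_smul_def, ofConjAct_toConjAct, Units.val_mul, _root_.mul_inv_rev,
      inv_inv, mul_assoc, Units.inv_mul_cancel_left]
  show dist (Φ _) (Φ _) = dist (Φ x) (Φ y)
  rw [hΦconj x hx, hΦconj y hy]
  exact Matrix.dist_toConjAct_smul_of_mem_unitary hp _ _

theorem conj_mul_eq_of_commute {G : Type*} [Group G] {a b x : G} (hbx : Commute b x) :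
    a * b * x * (a * b)⁻¹ = a * x * a⁻¹ := by
  rw [mul_assoc a b x, hbx.eq, _root_.mul_inv_rev]
  group

theorem recurrentSet_conj_linear_semisimple_general
    {d : ℕ} (S : Subgroup (Matrix.GeneralLinearGroup (Fin d) ℝ))
    (g e h u : Matrix.GeneralLinearGroup (Fin d) ℝ) (hg : g ∈ S)
    (he : IsElliptic e) (hh : IsHyperbolic h) (hu : IsUnipotentGL u)
    (hdecomp : g = e * h * u)
    (ceh : Commute e h) (ceu : Commute e u) (chu : Commute h u) :
    recurrentSet (fun x : ↥S => (⟨g, hg⟩ : ↥S) * x * (⟨g, hg⟩ : ↥S)⁻¹) =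
      {x : ↥S | Commute (x : Matrix.GeneralLinearGroup (Fin d) ℝ) h ∧
        Commute (x : Matrix.GeneralLinearGroup (Fin d) ℝ) u} ∧
    ∃ m : MetricSpace
        ↥(recurrentSet (fun x : ↥S => (⟨g, hg⟩ : ↥S) * x * (⟨g, hg⟩ : ↥S)⁻¹)),
      m.toUniformSpace.toTopologicalSpace = instTopologicalSpaceSubtype ∧
      ∀ (x y : ↥(recurrentSet (fun x : ↥S => (⟨g, hg⟩ : ↥S) * x * (⟨g, hg⟩ : ↥S)⁻¹)))
        (hx : (⟨g, hg⟩ : ↥S) * (x : ↥S) * (⟨g, hg⟩ : ↥S)⁻¹ ∈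
          recurrentSet (fun x : ↥S => (⟨g, hg⟩ : ↥S) * x * (⟨g, hg⟩ : ↥S)⁻¹))
        (hy : (⟨g, hg⟩ : ↥S) * (y : ↥S) * (⟨g, hg⟩ : ↥S)⁻¹ ∈
          recurrentSet (fun x : ↥S => (⟨g, hg⟩ : ↥S) * x * (⟨g, hg⟩ : ↥S)⁻¹)),
        m.dist ⟨(⟨g, hg⟩ : ↥S) * (x : ↥S) * (⟨g, hg⟩ : ↥S)⁻¹, hx⟩
               ⟨(⟨g, hg⟩ : ↥S) * (y : ↥S) * (⟨g, hg⟩ : ↥S)⁻¹, hy⟩ = m.dist x y := by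
  have hι : IsInducing fun x : S => ((x : GL (Fin d) ℝ) : Matrix (Fin d) (Fin d) ℝ) :=
    (Matrix.GeneralLinearGroup.isEmbedding_val.comp IsEmbedding.subtypeVal).isInducing
  have hR : recurrentSet (fun x : ↥S => (⟨g, hg⟩ : ↥S) * x * (⟨g, hg⟩ : ↥S)⁻¹) =
      {x : ↥S | Commute (x : GL (Fin d) ℝ) h ∧ Commute (x : GL (Fin d) ℝ) u} := by
    ext x
    rw [hι.mem_recurrentSet_iff (F := fun Y => toConjAct g • Y) fun y => by simp [units_smul_def],
      mem_recurrentSet_toConjAct_smul_iff he hh hu hdecomp ceh ceu chu]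
    simp only [Set.mem_ofPred_eq, Commute.units_val_iff]
    exact and_congr Commute.symm_iff Commute.symm_iff
  refine ⟨hR, exists_metricSpace_isometry_conj_of_isElliptic hg he fun x hx => ?_⟩
  rw [hR] at hx
  rw [hdecomp, mul_assoc e h u]
  exact conj_mul_eq_of_commute (hx.1.symm.mul_left hx.2.symm)

/-- **The recurrent set of a conjugation of a connected linear semi-simple Lie group**
(Caldas–Patrão, Lemma 4.2). Let `G ≤ GL(d, ℝ)` be a connected closed subgroup whose Lie
algebra `L = {X : ∀ t, exp(tX) ∈ G}` is semi-simple, and let `g ∈ G` have multiplicative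
Jordan decomposition `g = e h u` with `e` elliptic, `h` hyperbolic, `u` unipotent,
pairwise commuting. Then the recurrent set of the conjugation `C_g : G → G` is
`G_h ∩ G_u`, the intersection of the centralizers of `h` and `u` in `G`; moreover `C_g`
restricted to its recurrent set is an isometry for some distance compatible with the
topology. -/
theorem recurrentSet_conj_linear_semisimple
    {d : ℕ} (S : Subgroup (Matrix.GeneralLinearGroup (Fin d) ℝ))
    (hclosed : IsClosed (S : Set (Matrix.GeneralLinearGroup (Fin d) ℝ)))
    (hconn : IsConnected (S : Set (Matrix.GeneralLinearGroup (Fin d) ℝ)))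
    (L : LieSubalgebra ℝ (Matrix (Fin d) (Fin d) ℝ))
    (hL : ∀ x : Matrix (Fin d) (Fin d) ℝ,
      x ∈ L ↔ ∀ t : ℝ, ∃ y ∈ S,
        (y : Matrix (Fin d) (Fin d) ℝ) = NormedSpace.exp (t • x))
    (hss : LieAlgebra.IsSemisimple ℝ ↥L)
    (g e h u : Matrix.GeneralLinearGroup (Fin d) ℝ) (hg : g ∈ S)
    (he : IsElliptic e) (hh : IsHyperbolic h) (hu : IsUnipotentGL u)
    (hdecomp : g = e * h * u)
    (ceh : Commute e h) (ceu : Commute e u) (chu : Commute h u) :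
    recurrentSet (fun x : ↥S => (⟨g, hg⟩ : ↥S) * x * (⟨g, hg⟩ : ↥S)⁻¹) =
      {x : ↥S | Commute (x : Matrix.GeneralLinearGroup (Fin d) ℝ) h ∧
        Commute (x : Matrix.GeneralLinearGroup (Fin d) ℝ) u} ∧
    ∃ m : MetricSpace
        ↥(recurrentSet (fun x : ↥S => (⟨g, hg⟩ : ↥S) * x * (⟨g, hg⟩ : ↥S)⁻¹)),
      m.toUniformSpace.toTopologicalSpace = instTopologicalSpaceSubtype ∧
      ∀ (x y : ↥(recurrentSet (fun x : ↥S => (⟨g, hg⟩ : ↥S) * x * (⟨g, hg⟩ : ↥S)⁻¹)))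
        (hx : (⟨g, hg⟩ : ↥S) * (x : ↥S) * (⟨g, hg⟩ : ↥S)⁻¹ ∈
          recurrentSet (fun x : ↥S => (⟨g, hg⟩ : ↥S) * x * (⟨g, hg⟩ : ↥S)⁻¹))
        (hy : (⟨g, hg⟩ : ↥S) * (y : ↥S) * (⟨g, hg⟩ : ↥S)⁻¹ ∈
          recurrentSet (fun x : ↥S => (⟨g, hg⟩ : ↥S) * x * (⟨g, hg⟩ : ↥S)⁻¹)),
        m.dist ⟨(⟨g, hg⟩ : ↥S) * (x : ↥S) * (⟨g, hg⟩ : ↥S)⁻¹, hx⟩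
               ⟨(⟨g, hg⟩ : ↥S) * (y : ↥S) * (⟨g, hg⟩ : ↥S)⁻¹, hy⟩ = m.dist x y :=
  recurrentSet_conj_linear_semisimple_general S g e h u hg he hh hu hdecomp ceh ceu chu
end
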